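/- In the two-step scalar example, define the open-loop loss L(θ) = ‖Δ(θ)x₀ + w₁‖² + ‖(1/2)(Δ(θ)x₀ + w₁)‖² + ‖Δ(θ)x₀‖² + ‖(1/2)(Δ(θ)x₀ + w₁) + w₂‖² where Δ(θ) = (2θ+1)/(2θ+3) - (2θ*+1)/(2θ*+3) and x₀ ≠ 0. Then the minimizer of L satisfies Δ(θ) = -(3w₁ + w₂)/(5x₀); in particular Δ(θ) = 0 at the minimizer if and only if 3w₁ + w₂ = 0. -/
import Mathlib

/-- Bias of the open-loop loss in the two-step scalar example: the loss, as a
function of δ = Δ(θ)x₀, is uniquely minimized at δ = -(3w₁+w₂)/5, i.e. the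
minimizer satisfies Δ(θ) = -(3w₁+w₂)/(5x₀); Δ(θ) = 0 at the minimizer iff
3w₁ + w₂ = 0. -/
theorem stmt_15 (w₁ w₂ x₀ θs : ℝ) (hx₀ : x₀ ≠ 0)
    (Δ : ℝ → ℝ)
    (hΔ : ∀ θ, Δ θ = (2*θ+1)/(2*θ+3) - (2*θs+1)/(2*θs+3))
    (G : ℝ → ℝ)
    (hG : ∀ δ, G δ = (δ + w₁)^2 + ((1/2)*(δ + w₁))^2 + δ^2
      + ((1/2)*(δ + w₁) + w₂)^2)
    (L : ℝ → ℝ)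
    (hL : ∀ θ, L θ = (Δ θ * x₀ + w₁)^2 + ((1/2)*(Δ θ * x₀ + w₁))^2
      + (Δ θ * x₀)^2 + ((1/2)*(Δ θ * x₀ + w₁) + w₂)^2) :
    (∀ θ, L θ = G (Δ θ * x₀)) ∧
    (∀ δ, δ ≠ -(3*w₁ + w₂)/5 → G (-(3*w₁ + w₂)/5) < G δ) ∧
    (∀ θ, Δ θ * x₀ = -(3*w₁ + w₂)/5 ↔ Δ θ = -(3*w₁ + w₂)/(5*x₀)) ∧
    ((-(3*w₁ + w₂)/(5*x₀) : ℝ) = 0 ↔ 3*w₁ + w₂ = 0) := by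
  refine ⟨fun θ => by rw [hL, hG], fun δ hδ => ?_, fun θ => ?_, ?_⟩
  · rw [hG, hG]
    have h : δ - (-(3*w₁ + w₂)/5) ≠ 0 := sub_ne_zero.mpr hδ
    nlinarith [sq_pos_of_ne_zero h, sq_nonneg (δ + (3*w₁ + w₂)/5)]
  · constructor
    · intro h; field_simp; nlinarith [h]
    · intro h; field_simp at h; nlinarith [h]
  · rw [div_eq_zero_iff]
    constructor
    · rintro (h | h)
      · linarith
      · exact absurd h (by simp [hx₀])
    · intro h; left; linarith
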